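/- arXiv:2402.19154 — 4 statements merged into one kernel-verified Lean document; each statement's English description precedes it below -/
import Mathlib

section
/- Let γ : ℝ → ℝ² be a C² curve with γ(t + 2π) = γ(t) and γ(t + π) = −γ(t) for all t, and let F(t₁,t₂) := [ω(γ''(t₁),γ(t₂)) + 2ω(γ'(t₁),γ'(t₂)) + ω(γ(t₁),γ''(t₂))] · ω(γ'(t₁),γ'(t₂)). Let Φ : ℝ → ℝ be continuous, strictly increasing, with Φ(Φ(t)) = t + π and t < Φ(t) < t + π for all t. Define the regions Ω_{γδ} := {(t,s) : 0 ≤ t ≤ 2π, t ≤ s ≤ Φ(t)} and Ω_{δγ*} := {(t,s) : 0 ≤ t ≤ 2π, Φ(t) ≤ s ≤ t + π}. Then ∬_{Ω_{γδ}} F(t₁,t₂) dt₁dt₂ = ∬_{Ω_{δγ*}} F(t₁,t₂) dt₁dt₂ = ∬_{[0,π]²} F(t₁,t₂) dt₁dt₂. -/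
open Real

/-- The standard area form (determinant) on `ℝ²`. -/
def omega2 (u v : ℝ × ℝ) : ℝ := u.1 * v.2 - u.2 * v.1

open MeasureTheory Set Function

private lemma stmt3_rect_int {g : ℝ × ℝ → ℝ} (hg : Continuous g) (a b c d : ℝ) :
    IntegrableOn g (Set.Ioc a b ×ˢ Set.Ioc c d) := by
  have h1 : IntegrableOn g (Set.Icc a b ×ˢ Set.Icc c d) :=
    (hg.continuousOn).integrableOn_compact (isCompact_Icc.prod isCompact_Icc)
  exact h1.mono_set (Set.prod_mono Set.Ioc_subset_Icc_self Set.Ioc_subset_Icc_self)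

private lemma stmt3_ind_int {g : ℝ × ℝ → ℝ} (hg : Continuous g) {S : Set (ℝ × ℝ)}
    (hS : MeasurableSet S) (a b c d : ℝ) :
    IntegrableOn (S.indicator g) (Set.Ioc a b ×ˢ Set.Ioc c d) :=
  (stmt3_rect_int hg a b c d).indicator hS

private lemma stmt3_swap (f : ℝ → ℝ → ℝ) {a b c d : ℝ} (hab : a ≤ b) (hcd : c ≤ d)
    (hf : IntegrableOn (Function.uncurry f) (Set.Ioc a b ×ˢ Set.Ioc c d)) :
    (∫ x in a..b, ∫ y in c..d, f x y) = ∫ y in c..d, ∫ x in a..b, f x y := by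
  rw [intervalIntegral.integral_of_le hab, intervalIntegral.integral_of_le hcd]
  simp_rw [intervalIntegral.integral_of_le hab, intervalIntegral.integral_of_le hcd]
  exact MeasureTheory.integral_integral_swap
    (by rw [Measure.prod_restrict, ← Measure.volume_eq_prod]; exact hf)

private lemma stmt3_param_int (f : ℝ → ℝ → ℝ) {a b c d : ℝ} (hcd : c ≤ d)
    (hf : IntegrableOn (Function.uncurry f) (Set.Ioc a b ×ˢ Set.Ioc c d)) :
    IntegrableOn (fun t => ∫ v in c..d, f t v) (Set.Ioc a b) := by
  have h1 : Integrable (Function.uncurry f)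
      ((volume.restrict (Set.Ioc a b)).prod (volume.restrict (Set.Ioc c d))) := by
    rw [Measure.prod_restrict, ← Measure.volume_eq_prod]; exact hf
  have h2 := h1.integral_prod_left
  apply h2.congr
  filter_upwards with t
  rw [intervalIntegral.integral_of_le hcd]
  rfl

theorem stmt_3 (γ : ℝ → ℝ × ℝ) (hγ : ContDiff ℝ 2 γ)
    (hper : ∀ t : ℝ, γ (t + 2 * π) = γ t)
    (hsym : ∀ t : ℝ, γ (t + π) = -γ t)
    (F : ℝ → ℝ → ℝ)
    (hF : ∀ t₁ t₂ : ℝ, F t₁ t₂ =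
      (omega2 (deriv (deriv γ) t₁) (γ t₂) + 2 * omega2 (deriv γ t₁) (deriv γ t₂)
        + omega2 (γ t₁) (deriv (deriv γ) t₂)) * omega2 (deriv γ t₁) (deriv γ t₂))
    (Φ : ℝ → ℝ) (hΦcont : Continuous Φ) (hΦmono : StrictMono Φ)
    (hΦΦ : ∀ t : ℝ, Φ (Φ t) = t + π)
    (hΦbound : ∀ t : ℝ, t < Φ t ∧ Φ t < t + π) :
    (∫ t in (0:ℝ)..(2 * π), ∫ s in t..(Φ t), F t s) =
      (∫ t in (0:ℝ)..(2 * π), ∫ s in (Φ t)..(t + π), F t s) ∧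
    (∫ t in (0:ℝ)..(2 * π), ∫ s in t..(Φ t), F t s) =
      (∫ t in (0:ℝ)..π, ∫ s in (0:ℝ)..π, F t s) := by
  have hπ : (0:ℝ) < π := Real.pi_pos
  have h0π : (0:ℝ) ≤ π := hπ.le
  have h02π : (0:ℝ) ≤ 2 * π := by linarith
  -- smoothness facts
  have h2 := hγ
  rw [show (2 : WithTop ℕ∞) = 1 + 1 from rfl, contDiff_succ_iff_deriv] at h2
  obtain ⟨hdγ, -, h1⟩ := h2
  rw [contDiff_one_iff_deriv] at h1
  obtain ⟨hdγ', hcγ''⟩ := h1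
  have hcγ : Continuous γ := hγ.continuous
  have hcγ' : Continuous (deriv γ) := hdγ'.continuous
  -- derivative symmetries
  have hs1 : ∀ t, deriv γ (t + π) = - deriv γ t := by
    intro t
    have he : (fun x => γ (x + π)) = fun x => -γ x := funext hsym
    calc deriv γ (t + π) = deriv (fun x => γ (x + π)) t := (deriv_comp_add_const γ π t).symm
      _ = deriv (fun x => -γ x) t := by rw [he]
      _ = - deriv γ t := deriv.neg
  have hs2 : ∀ t, deriv (deriv γ) (t + π) = - deriv (deriv γ) t := by
    intro t
    have he : (fun x => deriv γ (x + π)) = fun x => -deriv γ x := funext hs1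
    calc deriv (deriv γ) (t + π) = deriv (fun x => deriv γ (x + π)) t :=
          (deriv_comp_add_const (deriv γ) π t).symm
      _ = deriv (fun x => -deriv γ x) t := by rw [he]
      _ = - deriv (deriv γ) t := deriv.neg
  -- F symmetries
  have hFswap : ∀ t s, F s t = F t s := by
    intro t s; rw [hF, hF]; simp only [omega2]; ring
  have hFp2 : ∀ t s, F t (s + π) = F t s := by
    intro t s
    rw [hF, hF, hsym, hs1, hs2]
    simp only [omega2, Prod.fst_neg, Prod.snd_neg]; ring
  have hFp1 : ∀ t s, F (t + π) s = F t s := by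
    intro t s; rw [← hFswap, hFp2, hFswap]
  -- continuity of F
  have hFc : Continuous (fun p : ℝ × ℝ => F p.1 p.2) := by
    have he : (fun p : ℝ × ℝ => F p.1 p.2) = fun p : ℝ × ℝ =>
        (omega2 (deriv (deriv γ) p.1) (γ p.2) + 2 * omega2 (deriv γ p.1) (deriv γ p.2)
          + omega2 (γ p.1) (deriv (deriv γ) p.2)) * omega2 (deriv γ p.1) (deriv γ p.2) :=
      funext fun p => hF p.1 p.2
    rw [he]
    simp only [omega2]
    fun_prop
  have hFtc : ∀ t, Continuous (F t) := fun t =>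
    hFc.comp (Continuous.prodMk continuous_const continuous_id)
  -- Φ facts
  have hΦadd : ∀ t, Φ (t + π) = Φ t + π := by
    intro t
    have h1 : Φ (Φ (Φ t)) = Φ t + π := hΦΦ (Φ t)
    rw [hΦΦ t] at h1
    exact h1
  set ψ : ℝ → ℝ := fun t => Φ t - t with hψdef
  have hψc : Continuous ψ := hΦcont.sub continuous_id
  have hψpos : ∀ t, 0 < ψ t := fun t => sub_pos.mpr (hΦbound t).1
  have hψlt : ∀ t, ψ t < π := by
    intro t; have := (hΦbound t).2; simp only [hψdef]; linarith
  have hψmem : ∀ t, ψ t ∈ Icc (0:ℝ) π := fun t => ⟨(hψpos t).le, (hψlt t).le⟩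
  have hψmem' : ∀ t, π - ψ t ∈ Icc (0:ℝ) π := fun t =>
    ⟨by linarith [hψlt t], by linarith [hψpos t]⟩
  have hψper : ∀ t, ψ (t + 2 * π) = ψ t := by
    intro t
    simp only [hψdef]
    rw [show t + 2 * π = t + π + π by ring, hΦadd, hΦadd]; ring
  have hcond : ∀ t v : ℝ, v ≤ π - ψ t ↔ v ≤ ψ (t - v) := by
    intro t v
    have h1 : Φ (Φ (t - v)) = t - v + π := hΦΦ _
    constructor
    · intro h
      have h2 : Φ t ≤ Φ (Φ (t - v)) := by
        rw [h1]; simp only [hψdef] at h; linarith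
      have h3 := hΦmono.le_iff_le.mp h2
      simp only [hψdef]; linarith
    · intro h
      have h2 : t ≤ Φ (t - v) := by simp only [hψdef] at h; linarith
      have h3 := hΦmono.le_iff_le.mpr h2
      rw [h1] at h3
      simp only [hψdef]; linarith
  -- G and K
  set G : ℝ → ℝ → ℝ := fun t v => F t (t + v) with hGdef
  have hGc : Continuous (fun p : ℝ × ℝ => G p.1 p.2) :=
    hFc.comp (continuous_fst.prodMk (continuous_fst.add continuous_snd))
  have hGref : ∀ t v, G t (π - v) = G (t - v) v := by
    intro t v
    simp only [hGdef]
    calc F t (t + (π - v)) = F t (t - v + π) := by rw [show t + (π - v) = t - v + π by ring]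
      _ = F t (t - v) := hFp2 _ _
      _ = F (t - v) t := hFswap _ _
      _ = F (t - v) (t - v + v) := by rw [show t - v + v = t by ring]
  have hGper : ∀ t v, G (t + 2 * π) v = G t v := by
    intro t v
    simp only [hGdef]
    calc F (t + 2 * π) (t + 2 * π + v)
        = F (t + π + π) (t + v + π + π) := by
          rw [show t + 2 * π = t + π + π by ring, show t + π + π + v = t + v + π + π by ring]
      _ = F t (t + v) := by rw [hFp1, hFp1, hFp2, hFp2]
  set K : ℝ → ℝ → ℝ := fun t v => Set.indicator {x | x ≤ ψ t} (G t) v with hKdef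
  -- pointwise representation of the inner integrals
  have repA : ∀ t, (∫ s in t..(Φ t), F t s) = ∫ v in (0:ℝ)..π, K t v := by
    intro t
    have h1 : (∫ v in (0:ℝ)..(ψ t), F t (t + v)) = ∫ s in t..(Φ t), F t s := by
      rw [intervalIntegral.integral_comp_add_left (fun s => F t s) t]
      rw [show t + (0:ℝ) = t by ring, show t + ψ t = Φ t by simp only [hψdef]; ring]
    rw [← h1, ← intervalIntegral.integral_indicator (hψmem t)]
  have repB : ∀ t, (∫ s in (Φ t)..(t + π), F t s) = ∫ v in (0:ℝ)..π, K (t - v) v := by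
    intro t
    have h1 : (∫ v in (ψ t)..π, F t (t + v)) = ∫ s in (Φ t)..(t + π), F t s := by
      rw [intervalIntegral.integral_comp_add_left (fun s => F t s) t]
      rw [show t + ψ t = Φ t by simp only [hψdef]; ring]
    have h2 : (∫ v in (0:ℝ)..(π - ψ t), G t (π - v)) = ∫ v in (ψ t)..π, G t v := by
      rw [intervalIntegral.integral_comp_sub_left (G t) π]
      rw [show π - (π - ψ t) = ψ t by ring, sub_zero]
    have h3 : (∫ v in (0:ℝ)..(π - ψ t), G t (π - v)) =
        ∫ v in (0:ℝ)..(π - ψ t), G (t - v) v :=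
      intervalIntegral.integral_congr (fun v _ => hGref t v)
    have h4 : ∀ v, Set.indicator {x | x ≤ π - ψ t} (fun v => G (t - v) v) v = K (t - v) v := by
      intro v
      simp only [hKdef]
      by_cases h : v ≤ ψ (t - v)
      · simp [Set.indicator_apply, mem_setOf_eq, h, show v ≤ π - ψ t from (hcond t v).mpr h]
      · simp [Set.indicator_apply, mem_setOf_eq, h,
          show ¬ v ≤ π - ψ t from fun hc => h ((hcond t v).mp hc)]
    calc (∫ s in (Φ t)..(t + π), F t s) = ∫ v in (ψ t)..π, G t v := h1.symm
      _ = ∫ v in (0:ℝ)..(π - ψ t), G (t - v) v := by rw [← h2, h3]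
      _ = ∫ v in (0:ℝ)..π, Set.indicator {x | x ≤ π - ψ t} (fun v => G (t - v) v) v :=
          (intervalIntegral.integral_indicator (hψmem' t)).symm
      _ = ∫ v in (0:ℝ)..π, K (t - v) v := intervalIntegral.integral_congr (fun v _ => h4 v)
  -- integrability facts
  have hSmeas : MeasurableSet {p : ℝ × ℝ | p.2 ≤ ψ p.1} :=
    (isClosed_le continuous_snd (hψc.comp continuous_fst)).measurableSet
  have hKunc : Function.uncurry K =
      Set.indicator {p : ℝ × ℝ | p.2 ≤ ψ p.1} (fun p => G p.1 p.2) := by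
    funext p
    simp only [Function.uncurry, hKdef, Set.indicator_apply, mem_setOf_eq]
  have hKint2 : IntegrableOn (Function.uncurry K) (Ioc (0:ℝ) (2 * π) ×ˢ Ioc (0:ℝ) π) := by
    rw [hKunc]; exact stmt3_ind_int hGc hSmeas 0 (2 * π) 0 π
  have hS'meas : MeasurableSet {p : ℝ × ℝ | p.2 ≤ ψ (p.1 - p.2)} :=
    (isClosed_le continuous_snd (hψc.comp (continuous_fst.sub continuous_snd))).measurableSet
  have hG'c : Continuous (fun p : ℝ × ℝ => G (p.1 - p.2) p.2) :=
    hGc.comp ((continuous_fst.sub continuous_snd).prodMk continuous_snd)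
  have hK'unc : Function.uncurry (fun t v => K (t - v) v) =
      Set.indicator {p : ℝ × ℝ | p.2 ≤ ψ (p.1 - p.2)} (fun p => G (p.1 - p.2) p.2) := by
    funext p
    simp only [Function.uncurry, hKdef, Set.indicator_apply, mem_setOf_eq]
  have hK'int : IntegrableOn (Function.uncurry (fun t v => K (t - v) v))
      (Ioc (0:ℝ) (2 * π) ×ˢ Ioc (0:ℝ) π) := by
    rw [hK'unc]; exact stmt3_ind_int hG'c hS'meas 0 (2 * π) 0 π
  -- main chain for claim 1
  have hA_eq : (∫ t in (0:ℝ)..(2 * π), ∫ s in t..(Φ t), F t s)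
      = ∫ t in (0:ℝ)..(2 * π), ∫ v in (0:ℝ)..π, K t v :=
    intervalIntegral.integral_congr (fun t _ => repA t)
  have hB_eq : (∫ t in (0:ℝ)..(2 * π), ∫ s in (Φ t)..(t + π), F t s)
      = ∫ t in (0:ℝ)..(2 * π), ∫ v in (0:ℝ)..π, K t v := by
    calc (∫ t in (0:ℝ)..(2 * π), ∫ s in (Φ t)..(t + π), F t s)
        = ∫ t in (0:ℝ)..(2 * π), ∫ v in (0:ℝ)..π, K (t - v) v :=
          intervalIntegral.integral_congr (fun t _ => repB t)
      _ = ∫ v in (0:ℝ)..π, ∫ t in (0:ℝ)..(2 * π), K (t - v) v :=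
          stmt3_swap _ h02π h0π hK'int
      _ = ∫ v in (0:ℝ)..π, ∫ t in (0:ℝ)..(2 * π), K t v := by
          apply intervalIntegral.integral_congr
          intro v _
          have hper : Function.Periodic (fun t => K t v) (2 * π) := by
            intro t
            simp only [hKdef, Set.indicator_apply, mem_setOf_eq, hψper, hGper]
          calc (∫ t in (0:ℝ)..(2 * π), K (t - v) v)
              = ∫ t in (0:ℝ) - v..(2 * π - v), K t v :=
                intervalIntegral.integral_comp_sub_right (fun t => K t v) v
            _ = ∫ t in (0:ℝ)..(2 * π), K t v := by
                have := hper.intervalIntegral_add_eq (0 - v) 0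
                rw [show (0:ℝ) - v + 2 * π = 2 * π - v by ring, zero_add] at this
                exact this
      _ = ∫ t in (0:ℝ)..(2 * π), ∫ v in (0:ℝ)..π, K t v :=
          (stmt3_swap _ h02π h0π hKint2).symm
  have claim1 : (∫ t in (0:ℝ)..(2 * π), ∫ s in t..(Φ t), F t s) =
      (∫ t in (0:ℝ)..(2 * π), ∫ s in (Φ t)..(t + π), F t s) := by
    rw [hA_eq, hB_eq]
  refine ⟨claim1, ?_⟩
  -- claim 2
  have hABsum : ∀ t, (∫ s in t..(Φ t), F t s) + (∫ s in (Φ t)..(t + π), F t s)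
      = ∫ s in (0:ℝ)..π, F t s := by
    intro t
    rw [intervalIntegral.integral_add_adjacent_intervals ((hFtc t).intervalIntegrable _ _)
      ((hFtc t).intervalIntegrable _ _)]
    have hperF : Function.Periodic (F t) π := fun s => hFp2 t s
    have := hperF.intervalIntegral_add_eq t 0
    rw [zero_add] at this
    exact this
  -- integrability of the two outer integrands
  have hAint : IntervalIntegrable (fun t => ∫ s in t..(Φ t), F t s) volume 0 (2 * π) := by
    rw [intervalIntegrable_iff_integrableOn_Ioc_of_le h02π]
    exact ((stmt3_param_int K h0π hKint2).congr
      (Filter.Eventually.of_forall (fun t => (repA t).symm)))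
  have hBint : IntervalIntegrable (fun t => ∫ s in (Φ t)..(t + π), F t s) volume 0 (2 * π) := by
    rw [intervalIntegrable_iff_integrableOn_Ioc_of_le h02π]
    exact ((stmt3_param_int _ h0π hK'int).congr
      (Filter.Eventually.of_forall (fun t => (repB t).symm)))
  have hsum : (∫ t in (0:ℝ)..(2 * π), ∫ s in t..(Φ t), F t s)
      + (∫ t in (0:ℝ)..(2 * π), ∫ s in (Φ t)..(t + π), F t s)
      = ∫ t in (0:ℝ)..(2 * π), ∫ s in (0:ℝ)..π, F t s := by
    rw [← intervalIntegral.integral_add hAint hBint]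
    exact intervalIntegral.integral_congr (fun t _ => hABsum t)
  -- the right-hand side doubles
  have hFrect : IntegrableOn (Function.uncurry F) (Ioc (0:ℝ) (2 * π) ×ˢ Ioc (0:ℝ) π) := by
    have : Function.uncurry F = fun p : ℝ × ℝ => F p.1 p.2 := rfl
    rw [this]; exact stmt3_rect_int hFc 0 (2 * π) 0 π
  have hDint : IntervalIntegrable (fun t => ∫ s in (0:ℝ)..π, F t s) volume 0 (2 * π) := by
    rw [intervalIntegrable_iff_integrableOn_Ioc_of_le h02π]
    exact stmt3_param_int F h0π hFrect
  have hDper : Function.Periodic (fun t => ∫ s in (0:ℝ)..π, F t s) π := by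
    intro t
    exact intervalIntegral.integral_congr (fun s _ => hFp1 t s)
  have hdouble : (∫ t in (0:ℝ)..(2 * π), ∫ s in (0:ℝ)..π, F t s)
      = 2 * ∫ t in (0:ℝ)..π, ∫ s in (0:ℝ)..π, F t s := by
    have hsplit : (∫ t in (0:ℝ)..π, ∫ s in (0:ℝ)..π, F t s)
        + (∫ t in π..(2 * π), ∫ s in (0:ℝ)..π, F t s)
        = ∫ t in (0:ℝ)..(2 * π), ∫ s in (0:ℝ)..π, F t s :=
      intervalIntegral.integral_add_adjacent_intervals
        (hDint.mono_set (by rw [uIcc_of_le h0π, uIcc_of_le h02π]; exact Icc_subset_Icc le_rfl (by linarith)))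
        (hDint.mono_set (by rw [uIcc_of_le (by linarith : π ≤ 2 * π), uIcc_of_le h02π]; exact Icc_subset_Icc h0π le_rfl))
    have hshift : (∫ t in π..(2 * π), ∫ s in (0:ℝ)..π, F t s)
        = ∫ t in (0:ℝ)..π, ∫ s in (0:ℝ)..π, F t s := by
      have := hDper.intervalIntegral_add_eq π 0
      rw [zero_add, show π + π = 2 * π by ring] at this
      exact this
    rw [← hsplit, hshift]; ring
  have := claim1
  linarith [hsum, hdouble, claim1]
end

section
/- Let γ = (γ₁,γ₂) : ℝ → ℝ² be a C² curve with γ(t + 2π) = γ(t) and γ(t + π) = −γ(t) for all t. Then ∬_{[0,π]²} ω(γ''(t₁),γ(t₂)) · ω(γ'(t₁),γ'(t₂)) dt₁dt₂ = (∫₀^π ω(γ''(t),γ'(t)) dt) · (∫₀^π γ₁(t)γ₂'(t) dt). -/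
/-!
For fixed `u v`, `ω(u,γ) ω(v,γ') = ω(u,v) γ₁ γ₂' + F'`, where
`F = (ω(u,γ) ω(v,γ) - ω(u,v) γ₁ γ₂) / 2` is an even quadratic function of `γ`; since
`γ(π) = -γ(0)`, `F` has equal values at `0` and `π`. Taking `u = γ''(t₁)`, `v = γ'(t₁)`, the inner
integral is therefore `ω(γ''(t₁), γ'(t₁)) ∫₀^π γ₁ γ₂'`, and the double integral factors.
-/

open Real

/-- The derivative simplifies by the Binet–Cauchy identity
`ω(u,v) ω(x,y) = ω(u,x) ω(v,y) - ω(u,y) ω(v,x)`. -/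
lemma hasDerivAt_omega2_mul_omega2_sub {γ γ' : ℝ → ℝ × ℝ} {t : ℝ} (hγ : HasDerivAt γ (γ' t) t)
    (u v : ℝ × ℝ) :
    HasDerivAt (fun s => omega2 u (γ s) * omega2 v (γ s) - omega2 u v * ((γ s).1 * (γ s).2))
      (2 * (omega2 u (γ t) * omega2 v (γ' t) - omega2 u v * ((γ t).1 * (γ' t).2))) t := by
  have h₁ : HasDerivAt (fun s => (γ s).1) (γ' t).1 t := hγ.fst
  have h₂ : HasDerivAt (fun s => (γ s).2) (γ' t).2 t := hγ.snd
  have hu : HasDerivAt (fun s => omega2 u (γ s)) (omega2 u (γ' t)) t :=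
    (h₂.const_mul u.1).sub (h₁.const_mul u.2)
  have hv : HasDerivAt (fun s => omega2 v (γ s)) (omega2 v (γ' t)) t :=
    (h₂.const_mul v.1).sub (h₁.const_mul v.2)
  exact ((hu.mul hv).sub ((h₁.mul h₂).const_mul (omega2 u v))).congr_deriv (by unfold omega2; ring)

open intervalIntegral in
lemma integral_omega2_mul_omega2_deriv {γ γ' : ℝ → ℝ × ℝ} {a b : ℝ}
    (hγ : ∀ t, HasDerivAt γ (γ' t) t) (hγ' : Continuous γ') (hab : γ b = -γ a) (u v : ℝ × ℝ) :
    ∫ t in a..b, omega2 u (γ t) * omega2 v (γ' t) =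
      omega2 u v * ∫ t in a..b, (γ t).1 * (γ' t).2 := by
  have hcont : Continuous γ := continuous_iff_continuousAt.2 fun t => (hγ t).continuousAt
  have hg : Continuous fun t => omega2 u (γ t) * omega2 v (γ' t) := by unfold omega2; fun_prop
  have hh : Continuous fun t => (γ t).1 * (γ' t).2 := by fun_prop
  have hFTC := integral_eq_sub_of_hasDerivAt
    (fun t _ => hasDerivAt_omega2_mul_omega2_sub (hγ t) u v)
    ((hg.sub (hh.const_mul (omega2 u v))).const_mul 2 |>.intervalIntegrable a b)
  rw [integral_const_mul, integral_sub (hg.intervalIntegrable a b)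
    ((hh.const_mul (omega2 u v)).intervalIntegrable a b), integral_const_mul, hab] at hFTC
  simp only [omega2, Prod.fst_neg, Prod.snd_neg] at hFTC ⊢
  linarith

open intervalIntegral in
theorem stmt_5_general (γ : ℝ → ℝ × ℝ) (hγ : ContDiff ℝ 2 γ)
    (hsym : ∀ t : ℝ, γ (t + π) = -γ t) :
    (∫ t₁ in (0:ℝ)..π, ∫ t₂ in (0:ℝ)..π,
        omega2 (deriv (deriv γ) t₁) (γ t₂) * omega2 (deriv γ t₁) (deriv γ t₂)) =
      (∫ t in (0:ℝ)..π, omega2 (deriv (deriv γ) t) (deriv γ t)) *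
        (∫ t in (0:ℝ)..π, (γ t).1 * (deriv γ t).2) := by
  have hderiv : ∀ t, HasDerivAt γ (deriv γ t) t :=
    fun t => (hγ.differentiable (by norm_num) t).hasDerivAt
  have hanti : γ π = -γ 0 := by simpa using hsym 0
  simp only [integral_omega2_mul_omega2_deriv hderiv (hγ.continuous_deriv (by norm_num)) hanti]
  exact integral_mul_const _ _

theorem stmt_5 (γ : ℝ → ℝ × ℝ) (hγ : ContDiff ℝ 2 γ)
    (hper : ∀ t : ℝ, γ (t + 2 * π) = γ t)
    (hsym : ∀ t : ℝ, γ (t + π) = -γ t) :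
    (∫ t₁ in (0:ℝ)..π, ∫ t₂ in (0:ℝ)..π,
        omega2 (deriv (deriv γ) t₁) (γ t₂) * omega2 (deriv γ t₁) (deriv γ t₂)) =
      (∫ t in (0:ℝ)..π, omega2 (deriv (deriv γ) t) (deriv γ t)) *
        (∫ t in (0:ℝ)..π, (γ t).1 * (deriv γ t).2) :=
  stmt_5_general γ hγ hsym
end

section
/- Let γ : ℝ → ℝ² be a C² curve with γ(t + 2π) = γ(t) and γ(t + π) = −γ(t) for all t, and set A := (1/2)∫₀^{2π} ω(γ(t),γ'(t)) dt. Then ∬_{[0,π]²} [ω(γ''(t₁),γ(t₂)) + ω(γ(t₁),γ''(t₂))] · ω(γ'(t₁),γ'(t₂)) dt₁dt₂ = −A · ∫₀^π ω(γ'(t),γ''(t)) dt. -/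
/-!
If `b(c) = -b(a)`, then `∫_a^c ω(p,b) ω(q,b') = ½ ω(p,q) ∫_a^c ω(b,b')` for all `p, q`: the part of
the integrand symmetric in `(b, b')` is the derivative of `½ ω(p,b) ω(q,b)`, which takes the same
value at both ends, and the antisymmetric part is `½ ω(p,q) ω(b,b')` by a Plücker identity.
For fixed `t₁`, applying this to `b = γ` and to `b = γ'` evaluates the inner integral as
`(A/2) ω(γ''(t₁),γ'(t₁)) + (W/2) ω(γ'(t₁),γ(t₁))` with `W = ∫₀^π ω(γ',γ'')`, because
`ω(γ,γ')` is `π`-periodic and so `A = ∫₀^π ω(γ,γ')`. Integrating in `t₁` gives `-AW/2 - AW/2`.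
-/

open Real

open Function intervalIntegral Set

lemma omega2_swap (u v : ℝ × ℝ) : omega2 v u = -omega2 u v := by
  unfold omega2; ring

lemma omega2_neg_left (u v : ℝ × ℝ) : omega2 (-u) v = -omega2 u v := by
  simp only [omega2, Prod.fst_neg, Prod.snd_neg]; ring

lemma omega2_neg_right (u v : ℝ × ℝ) : omega2 u (-v) = -omega2 u v := by
  simp only [omega2, Prod.fst_neg, Prod.snd_neg]; ring

lemma omega2_zero_left (v : ℝ × ℝ) : omega2 0 v = 0 := by
  simp only [omega2, Prod.fst_zero, Prod.snd_zero]; ring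

lemma omega2_mul_omega2_sub_omega2_mul_omega2 (p q u v : ℝ × ℝ) :
    omega2 p u * omega2 q v - omega2 p v * omega2 q u = omega2 p q * omega2 u v := by
  unfold omega2; ring

section Continuity

variable {α : Type*} [TopologicalSpace α] {f g : α → ℝ × ℝ}

@[fun_prop]
lemma Continuous.omega2 (hf : Continuous f) (hg : Continuous g) :
    Continuous fun x => omega2 (f x) (g x) := by
  unfold _root_.omega2; fun_prop

@[fun_prop]
lemma ContinuousOn.omega2 {s : Set α} (hf : ContinuousOn f s) (hg : ContinuousOn g s) :
    ContinuousOn (fun x => omega2 (f x) (g x)) s := by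
  unfold _root_.omega2; fun_prop

end Continuity

lemma HasDerivAt.omega2 {f g : ℝ → ℝ × ℝ} {f' g' : ℝ × ℝ} {t : ℝ}
    (hf : HasDerivAt f f' t) (hg : HasDerivAt g g' t) :
    HasDerivAt (fun s => omega2 (f s) (g s)) (omega2 f' (g t) + omega2 (f t) g') t := by
  have hf₁ : HasDerivAt (fun s => (f s).1) f'.1 t :=
    (hasFDerivAt_fst (p := f t)).comp_hasDerivAt t hf
  have hf₂ : HasDerivAt (fun s => (f s).2) f'.2 t :=
    (hasFDerivAt_snd (p := f t)).comp_hasDerivAt t hf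
  have hg₁ : HasDerivAt (fun s => (g s).1) g'.1 t :=
    (hasFDerivAt_fst (p := g t)).comp_hasDerivAt t hg
  have hg₂ : HasDerivAt (fun s => (g s).2) g'.2 t :=
    (hasFDerivAt_snd (p := g t)).comp_hasDerivAt t hg
  exact ((hf₁.mul hg₂).sub (hf₂.mul hg₁)).congr_deriv (by unfold _root_.omega2; ring)

lemma Function.Antiperiodic.deriv {𝕜 F : Type*} [NontriviallyNormedField 𝕜]
    [NormedAddCommGroup F] [NormedSpace 𝕜 F] {f : 𝕜 → F} {c : 𝕜} (hf : Antiperiodic f c) :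
    Antiperiodic (deriv f) c := fun x => by
  rw [← deriv_comp_add_const, funext hf, deriv.fun_neg]

lemma Function.Antiperiodic.omega2 {f g : ℝ → ℝ × ℝ} {c : ℝ} (hf : Antiperiodic f c)
    (hg : Antiperiodic g c) : Periodic (fun t => omega2 (f t) (g t)) c := fun t => by
  simp only [hf t, hg t, omega2_neg_left, omega2_neg_right, neg_neg]

lemma Function.Antiperiodic.integral_omega2_two_mul {f g : ℝ → ℝ × ℝ} {c : ℝ}
    (hf : Antiperiodic f c) (hg : Antiperiodic g c) (hfc : Continuous f) (hgc : Continuous g) :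
    ∫ t in (0:ℝ)..2 * c, _root_.omega2 (f t) (g t) =
      2 * ∫ t in (0:ℝ)..c, _root_.omega2 (f t) (g t) := by
  rw [two_mul, (hf.omega2 hg).intervalIntegral_add_eq_add 0 c
      (fun _ _ => Continuous.intervalIntegrable (by fun_prop) _ _), zero_add, two_mul]

theorem integral_omega2_mul_omega2 {b b' : ℝ → ℝ × ℝ} {a c : ℝ}
    (hb : ∀ t ∈ uIcc a c, HasDerivAt b (b' t) t) (hb' : ContinuousOn b' (uIcc a c))
    (hbc : b c = -b a) (p q : ℝ × ℝ) :
    ∫ s in a..c, omega2 p (b s) * omega2 q (b' s) =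
      (1 / 2 * ∫ s in a..c, omega2 (b s) (b' s)) * omega2 p q := by
  have hbcont : ContinuousOn b (uIcc a c) :=
    fun t ht => (hb t ht).continuousAt.continuousWithinAt
  have hderiv : ∀ t ∈ uIcc a c, HasDerivAt (fun s => omega2 p (b s) * omega2 q (b s) / 2)
      (omega2 p (b t) * omega2 q (b' t) - 1 / 2 * omega2 p q * omega2 (b t) (b' t)) t := by
    intro t ht
    have hp := (hasDerivAt_const t p).omega2 (hb t ht)
    have hq := (hasDerivAt_const t q).omega2 (hb t ht)
    refine ((hp.mul hq).div_const 2).congr_deriv ?_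
    rw [omega2_zero_left, zero_add, zero_add]
    linear_combination (-1 / 2 : ℝ) * omega2_mul_omega2_sub_omega2_mul_omega2 p q (b t) (b' t)
  have hzero := integral_eq_sub_of_hasDerivAt hderiv
    (ContinuousOn.intervalIntegrable (by fun_prop))
  rw [hbc, omega2_neg_right, omega2_neg_right, neg_mul_neg, sub_self,
    integral_sub (ContinuousOn.intervalIntegrable (by fun_prop))
      (ContinuousOn.intervalIntegrable (by fun_prop)), integral_const_mul] at hzero
  linear_combination hzero

theorem stmt_6_general (γ : ℝ → ℝ × ℝ) (hγ : ContDiff ℝ 2 γ)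
    (hsym : ∀ t : ℝ, γ (t + π) = -γ t)
    (A : ℝ) (hA : A = (1 / 2) * ∫ t in (0:ℝ)..(2 * π), omega2 (γ t) (deriv γ t)) :
    (∫ t₁ in (0:ℝ)..π, ∫ t₂ in (0:ℝ)..π,
        (omega2 (deriv (deriv γ) t₁) (γ t₂) + omega2 (γ t₁) (deriv (deriv γ) t₂)) *
          omega2 (deriv γ t₁) (deriv γ t₂)) =
      -A * ∫ t in (0:ℝ)..π, omega2 (deriv γ t) (deriv (deriv γ) t) := by
  have hγ' : ContDiff ℝ 1 (deriv γ) := ContDiff.deriv' (n := 1) hγ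
  have hdγ : ∀ t, HasDerivAt γ (deriv γ t) t :=
    fun t => (hγ.differentiable two_ne_zero t).hasDerivAt
  have hdγ' : ∀ t, HasDerivAt (deriv γ) (deriv (deriv γ) t) t :=
    fun t => (hγ'.differentiable one_ne_zero t).hasDerivAt
  have hcγ : Continuous γ := hγ.continuous
  have hcγ' : Continuous (deriv γ) := hγ'.continuous
  have hcγ'' : Continuous (deriv (deriv γ)) := hγ'.continuous_deriv le_rfl
  have hsym' : Antiperiodic (deriv γ) π := Antiperiodic.deriv hsym
  have hA' : A = ∫ t in (0:ℝ)..π, omega2 (γ t) (deriv γ t) := by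
    rw [hA, Antiperiodic.integral_omega2_two_mul hsym hsym' hcγ hcγ']
    ring
  set W := ∫ t in (0:ℝ)..π, omega2 (deriv γ t) (deriv (deriv γ) t)
  have inner : ∀ t₁, ∫ t₂ in (0:ℝ)..π,
      (omega2 (deriv (deriv γ) t₁) (γ t₂) + omega2 (γ t₁) (deriv (deriv γ) t₂)) *
        omega2 (deriv γ t₁) (deriv γ t₂) =
      A / 2 * omega2 (deriv (deriv γ) t₁) (deriv γ t₁) + W / 2 * omega2 (deriv γ t₁) (γ t₁) := by
    intro t₁
    simp_rw [add_mul, mul_comm (omega2 (γ t₁) _)]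
    rw [integral_add (Continuous.intervalIntegrable (by fun_prop) _ _)
        (Continuous.intervalIntegrable (by fun_prop) _ _),
      integral_omega2_mul_omega2 (fun t _ => hdγ t) hcγ'.continuousOn (by simpa using hsym 0),
      integral_omega2_mul_omega2 (fun t _ => hdγ' t) hcγ''.continuousOn
        (by simpa using hsym' 0), ← hA']
    ring
  rw [integral_congr fun t₁ _ => inner t₁,
    integral_add (Continuous.intervalIntegrable (by fun_prop) _ _)
      (Continuous.intervalIntegrable (by fun_prop) _ _), integral_const_mul, integral_const_mul]
  simp only [omega2_swap _ (deriv (deriv γ) _), omega2_swap (γ _) (deriv γ _), integral_neg,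
    ← hA']
  ring

theorem stmt_6 (γ : ℝ → ℝ × ℝ) (hγ : ContDiff ℝ 2 γ)
    (hper : ∀ t : ℝ, γ (t + 2 * π) = γ t)
    (hsym : ∀ t : ℝ, γ (t + π) = -γ t)
    (A : ℝ) (hA : A = (1 / 2) * ∫ t in (0:ℝ)..(2 * π), omega2 (γ t) (deriv γ t)) :
    (∫ t₁ in (0:ℝ)..π, ∫ t₂ in (0:ℝ)..π,
        (omega2 (deriv (deriv γ) t₁) (γ t₂) + omega2 (γ t₁) (deriv (deriv γ) t₂)) *
          omega2 (deriv γ t₁) (deriv γ t₂)) =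
      -A * ∫ t in (0:ℝ)..π, omega2 (deriv γ t) (deriv (deriv γ) t) :=
  stmt_6_general γ hγ hsym A hA
end

section
/- Let e_α := (−sin α, cos α), J(x,y) = (−y,x), let p : ℝ → ℝ be a C² function, and define γ(α) := p'(α)e_α − p(α)Je_α. Then for all α₁, α₂ ∈ ℝ: ω(γ'(α₁),γ'(α₂)) = (p''(α₁) + p(α₁))(p''(α₂) + p(α₂)) sin(α₂ − α₁). In particular, if p''(α) + p(α) > 0 for all α, then ω(γ'(α₁),γ'(α₂)) > 0 whenever 0 < α₂ − α₁ < π (the twist condition). -/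
open Real

/-- The unit vector forming an angle `α` with the vertical direction `(0,1)`. -/
noncomputable def eVec (α : ℝ) : ℝ × ℝ := (-Real.sin α, Real.cos α)

/-- Rotation by `π/2` in the positive direction. -/
def Jrot (v : ℝ × ℝ) : ℝ × ℝ := (-v.2, v.1)

/-! The frame `(e_α, J e_α)` rotates with unit speed, so in the derivative of
`γ = p' e_α - p J e_α` the two `p' J e_α` terms cancel and `γ' = (p'' + p) e_α`.
Hence `ω(γ'(α₁), γ'(α₂))` is `(p'' + p)(α₁) (p'' + p)(α₂) ω(e_{α₁}, e_{α₂})`,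
and `ω(e_{α₁}, e_{α₂}) = sin (α₂ - α₁)`. -/

lemma omega2_smul_smul (a b : ℝ) (u v : ℝ × ℝ) :
    omega2 (a • u) (b • v) = a * b * omega2 u v := by
  simp only [omega2, Prod.smul_fst, Prod.smul_snd, smul_eq_mul]
  ring

lemma omega2_eVec (α₁ α₂ : ℝ) : omega2 (eVec α₁) (eVec α₂) = Real.sin (α₂ - α₁) := by
  rw [omega2, eVec, eVec, Real.sin_sub]
  ring

lemma hasDerivAt_eVec (α : ℝ) : HasDerivAt eVec (Jrot (eVec α)) α := by
  unfold eVec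
  simpa [Jrot] using (Real.hasDerivAt_sin α).neg.prodMk (Real.hasDerivAt_cos α)

lemma hasDerivAt_Jrot_eVec (α : ℝ) : HasDerivAt (fun a => Jrot (eVec a)) (-eVec α) α := by
  simpa [eVec, Jrot] using (Real.hasDerivAt_cos α).neg.prodMk (Real.hasDerivAt_sin α).neg

lemma hasDerivAt_support_curve {p : ℝ → ℝ} {α : ℝ} (hp : DifferentiableAt ℝ p α)
    (hp' : DifferentiableAt ℝ (deriv p) α) :
    HasDerivAt (fun a => deriv p a • eVec a - p a • Jrot (eVec a))
      ((deriv (deriv p) α + p α) • eVec α) α := by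
  refine ((hp'.hasDerivAt.smul (hasDerivAt_eVec α)).sub
    (hp.hasDerivAt.smul (hasDerivAt_Jrot_eVec α))).congr_deriv ?_
  module

theorem stmt_8 (p : ℝ → ℝ) (hp : ContDiff ℝ 2 p)
    (γ : ℝ → ℝ × ℝ)
    (hγ : ∀ α : ℝ, γ α = deriv p α • eVec α - p α • Jrot (eVec α)) :
    (∀ α₁ α₂ : ℝ, omega2 (deriv γ α₁) (deriv γ α₂) =
      (deriv (deriv p) α₁ + p α₁) * (deriv (deriv p) α₂ + p α₂) * Real.sin (α₂ - α₁)) ∧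
    ((∀ α : ℝ, 0 < deriv (deriv p) α + p α) →
      ∀ α₁ α₂ : ℝ, 0 < α₂ - α₁ → α₂ - α₁ < π →
        0 < omega2 (deriv γ α₁) (deriv γ α₂)) := by
  have hp' : Differentiable ℝ (deriv p) :=
    (hp.iterate_deriv' 1 1).differentiable one_ne_zero
  have hγ' (α : ℝ) : deriv γ α = (deriv (deriv p) α + p α) • eVec α := by
    rw [funext hγ]
    exact (hasDerivAt_support_curve (hp.differentiable two_ne_zero α) (hp' α)).deriv
  have hω (α₁ α₂ : ℝ) : omega2 (deriv γ α₁) (deriv γ α₂) =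
      (deriv (deriv p) α₁ + p α₁) * (deriv (deriv p) α₂ + p α₂) * Real.sin (α₂ - α₁) := by
    rw [hγ', hγ', omega2_smul_smul, omega2_eVec]
  refine ⟨hω, fun hpos α₁ α₂ h₀ hπ => ?_⟩
  rw [hω]
  exact mul_pos (mul_pos (hpos α₁) (hpos α₂)) (Real.sin_pos_of_pos_of_lt_pi h₀ hπ)
end
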